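/- arXiv:1608.03002 — 2 statements merged into one kernel-verified Lean document; each statement's English description precedes it below -/
import Mathlib

section
/- (Domination Lemma, non-adjacent case) Let v, w be vertices of a graph G with v dominating w (i.e., N(w) ∪ {w, v} ⊆ N(v) ∪ {v, w}) and v not adjacent to w. Then the independence complex I_G is homotopy equivalent to I_{G−v}. -/
open scoped unitInterval

/-- The defining relation for the topological join of two spaces. -/
inductive JoinRel (X Y : Type*) :
    (X × Y × I) ⊕ (X ⊕ Y) → (X × Y × I) ⊕ (X ⊕ Y) → Prop
  | zero (x : X) (y : Y) : JoinRel X Y (.inl (x, y, 0)) (.inr (.inl x))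
  | one (x : X) (y : Y) : JoinRel X Y (.inl (x, y, 1)) (.inr (.inr y))

/-- The topological join `X * Y`. -/
def TopJoin (X Y : Type*) [TopologicalSpace X] [TopologicalSpace Y] : Type _ :=
  Quot (JoinRel X Y)

instance (X Y : Type*) [TopologicalSpace X] [TopologicalSpace Y] :
    TopologicalSpace (TopJoin X Y) := by
  unfold TopJoin; infer_instance

/-- The inclusion of the first factor into the join. -/
def TopJoin.inl {X Y : Type*} [TopologicalSpace X] [TopologicalSpace Y] (x : X) :
    TopJoin X Y :=
  Quot.mk _ (.inr (.inl x))

/-- The (unreduced) suspension, as the join with a two-point space. -/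
def Susp (X : Type*) [TopologicalSpace X] : Type _ := TopJoin X Bool

instance (X : Type*) [TopologicalSpace X] : TopologicalSpace (Susp X) :=
  inferInstanceAs (TopologicalSpace (TopJoin X Bool))

/-- The north pole of the suspension. -/
def suspApex (X : Type*) [TopologicalSpace X] : Susp X :=
  Quot.mk _ (.inr (.inr true))

/-- The wedge (one-point union) of two pointed spaces. -/
def Wedge (X Y : Type*) [TopologicalSpace X] [TopologicalSpace Y] (x0 : X) (y0 : Y) :
    Type _ :=
  Quot (fun a b : X ⊕ Y => a = Sum.inl x0 ∧ b = Sum.inr y0)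

instance (X Y : Type*) [TopologicalSpace X] [TopologicalSpace Y] (x0 : X) (y0 : Y) :
    TopologicalSpace (Wedge X Y x0 y0) := by
  unfold Wedge; infer_instance

/-- The wedge of a family of pointed spaces. -/
def WedgeFam {ι : Type*} (X : ι → Type*) [∀ i, TopologicalSpace (X i)]
    (pt : ∀ i, X i) : Type _ :=
  Quot (fun a b : Σ i, X i => ∃ i j, a = ⟨i, pt i⟩ ∧ b = ⟨j, pt j⟩)

instance {ι : Type*} (X : ι → Type*) [∀ i, TopologicalSpace (X i)] (pt : ∀ i, X i) :
    TopologicalSpace (WedgeFam X pt) := by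
  unfold WedgeFam; infer_instance

/-- The `k`-dimensional sphere. -/
abbrev nSphere (k : ℕ) : Type :=
  ↥(Metric.sphere (0 : EuclideanSpace ℝ (Fin (k + 1))) 1)

/-- A base point on the `k`-sphere. -/
noncomputable def sphereBase (k : ℕ) : nSphere k :=
  ⟨EuclideanSpace.single 0 1, by
    simp [EuclideanSpace.norm_single]⟩

/-- An abstract simplicial complex on a vertex set `V`. -/
structure AbsSimplicialComplex (V : Type*) where
  faces : Set (Finset V)
  down_closed : ∀ ⦃s⦄, s ∈ faces → ∀ ⦃t : Finset V⦄, t ⊆ s → t ∈ faces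

/-- The geometric realization of an abstract simplicial complex, as the space of
convex-combination weight functions supported on a face. -/
def AbsSimplicialComplex.space {V : Type*} (K : AbsSimplicialComplex V) : Type _ :=
  {f : V → ℝ // (∀ x, 0 ≤ f x) ∧
    ∃ s ∈ K.faces, (∀ x, x ∉ s → f x = 0) ∧ ∑ x ∈ s, f x = 1}

instance {V : Type*} (K : AbsSimplicialComplex V) : TopologicalSpace K.space := by
  unfold AbsSimplicialComplex.space; infer_instance

/-- The independence complex of a graph, restricted to vertices in `A`:
faces are the independent sets of `G` contained in `A`. -/
def indepComplexOn {V : Type*} (G : SimpleGraph V) (A : Set V) :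
    AbsSimplicialComplex V where
  faces := {s | ↑s ⊆ A ∧ ∀ a ∈ s, ∀ b ∈ s, ¬ G.Adj a b}
  down_closed := by
    intro s hs t ht
    exact ⟨fun x hx => hs.1 (ht hx), fun a ha b hb => hs.2 a (ht ha) b (ht hb)⟩

/-- The independence complex of a graph. -/
def indepComplex {V : Type*} (G : SimpleGraph V) : AbsSimplicialComplex V :=
  indepComplexOn G Set.univ

/-- The closed star of a vertex: the vertex together with its neighbors. -/
def stSet {V : Type*} (G : SimpleGraph V) (v : V) : Set V :=
  insert v (G.neighborSet v)

lemma indepComplexOn_mono {V : Type*} (G : SimpleGraph V) {A B : Set V} (h : A ⊆ B) :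
    (indepComplexOn G A).faces ⊆ (indepComplexOn G B).faces :=
  fun _ hs => ⟨fun x hx => h (hs.1 hx), hs.2⟩

/-- The inclusion of the realization of a subcomplex. -/
def inclMap {V : Type*} (K L : AbsSimplicialComplex V) (h : K.faces ⊆ L.faces) :
    C(K.space, L.space) where
  toFun := fun f => ⟨f.1, f.2.1, by
    obtain ⟨s, hs, h2⟩ := f.2.2
    exact ⟨s, h hs, h2⟩⟩
  continuous_toFun := Continuous.subtype_mk continuous_subtype_val _
/-- The cone over `K` with apex `v`, inside the same vertex set. -/
def coneAt {V : Type*} [DecidableEq V] (v : V) (K : AbsSimplicialComplex V) :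
    AbsSimplicialComplex V where
  faces := {s | s.erase v ∈ K.faces}
  down_closed := by
    intro s hs t ht
    exact K.down_closed hs (Finset.erase_subset_erase _ ht)

/-- The cone over `K` with a fresh apex vertex `none`. -/
def coneVertex {V : Type*} (K : AbsSimplicialComplex V) :
    AbsSimplicialComplex (Option V) where
  faces := {s | Finset.eraseNone s ∈ K.faces}
  down_closed := by
    intro s hs t ht
    refine K.down_closed hs ?_
    intro x hx
    rw [Finset.mem_eraseNone] at hx ⊢
    exact ht hx

/-- The join of two simplicial complexes on disjoint vertex sets. -/
def complexJoin {V W : Type*} (K : AbsSimplicialComplex V)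
    (L : AbsSimplicialComplex W) : AbsSimplicialComplex (V ⊕ W) where
  faces := {s | s.toLeft ∈ K.faces ∧ s.toRight ∈ L.faces}
  down_closed := by
    intro s hs t ht
    constructor
    · refine K.down_closed hs.1 ?_
      intro x hx; rw [Finset.mem_toLeft] at hx ⊢; exact ht hx
    · refine L.down_closed hs.2 ?_
      intro x hx; rw [Finset.mem_toRight] at hx ⊢; exact ht hx

/-- The disjoint union of two graphs. -/
def graphSum {V W : Type*} (G : SimpleGraph V) (H : SimpleGraph W) :
    SimpleGraph (V ⊕ W) where
  Adj a b :=
    match a, b with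
    | .inl x, .inl y => G.Adj x y
    | .inr x, .inr y => H.Adj x y
    | _, _ => False
  symm := ⟨by rintro (x | x) (y | y) h; exacts [G.adj_symm h, h.elim, h.elim, H.adj_symm h]⟩
  loopless := ⟨by rintro (x | x) h; exacts [G.irrefl h, H.irrefl h]⟩

/-- The subcomplex `A_u = I_{G - st(u)} * u` of the independence complex:
simplices `σ` with `σ ∪ {u}` independent. -/
def Afan {V : Type*} [DecidableEq V] (G : SimpleGraph V) (u : V) :
    AbsSimplicialComplex V where
  faces := {s | ∀ a ∈ insert u s, ∀ b ∈ insert u s, ¬ G.Adj a b}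
  down_closed := by
    intro s hs t ht a ha b hb
    exact hs a (Finset.insert_subset_insert u ht ha) b (Finset.insert_subset_insert u ht hb)

/-- The join of a complex with the full simplex on the vertex set `s`. -/
def joinSimplex {V : Type*} [DecidableEq V] (s : Finset V)
    (K : AbsSimplicialComplex V) : AbsSimplicialComplex V where
  faces := {t | t \ s ∈ K.faces}
  down_closed := by
    intro t ht r hr
    exact K.down_closed ht (Finset.sdiff_subset_sdiff hr (subset_refl s))

/-- The complex `K(G, v)` of Theorem 6.4: independent sets of `G - st(v)`
missing `W_u = lk(u) - v` entirely, for at least one neighbor `u` of `v`. -/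
def Kcomplex {V : Type*} (G : SimpleGraph V) (v : V) : AbsSimplicialComplex V where
  faces := {s | s ∈ (indepComplexOn G (stSet G v)ᶜ).faces ∧
      ∃ u, G.Adj v u ∧ ∀ w ∈ s, ¬ (G.Adj u w ∧ w ≠ v)}
  down_closed := by
    intro s hs t ht
    refine ⟨(indepComplexOn G (stSet G v)ᶜ).down_closed hs.1 ht, ?_⟩
    obtain ⟨u, hu, hw⟩ := hs.2
    exact ⟨u, hu, fun w hwt => hw w (ht hwt)⟩

/-- Auxiliary relation for subdividing the edge `uv` into a path of four edges
through three new vertices `0, 1, 2`. -/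
def sRel {V : Type*} (G : SimpleGraph V) (u v : V) :
    V ⊕ Fin 3 → V ⊕ Fin 3 → Prop
  | .inl x, .inl y => G.Adj x y ∧ ¬((x = u ∧ y = v) ∨ (x = v ∧ y = u))
  | .inl x, .inr i => (x = u ∧ i = 0) ∨ (x = v ∧ i = 2)
  | .inr i, .inr j => (i : ℕ) + 1 = (j : ℕ)
  | .inr _, .inl _ => False

/-- The graph obtained from `G` by replacing the edge `uv` by the path
`u - 0 - 1 - 2 - v` of four edges. -/
def subdivide4 {V : Type*} (G : SimpleGraph V) (u v : V) :
    SimpleGraph (V ⊕ Fin 3) where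
  Adj a b := sRel G u v a b ∨ sRel G u v b a
  symm := ⟨fun _ _ h => h.symm⟩
  loopless := ⟨by
    rintro (x | i) h
    · rcases h with h | h <;> exact G.irrefl h.1
    · rcases h with h | h <;> (simp only [sRel] at h; omega)⟩

lemma stSet_compl_subset {V : Type*} (G : SimpleGraph V) (v : V) :
    (stSet G v)ᶜ ⊆ ({v} : Set V)ᶜ :=
  Set.compl_subset_compl.mpr fun x hx => by
    rw [Set.mem_singleton_iff] at hx
    rw [hx]
    exact Set.mem_insert v _

/-- The inclusion of the realization of `I_{G - st(v)}` into that of `I_{G - v}`. -/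
def linkIncl {V : Type*} (G : SimpleGraph V) (v : V) :
    C((indepComplexOn G (stSet G v)ᶜ).space, (indepComplexOn G ({v} : Set V)ᶜ).space) :=
  inclMap _ _ (indepComplexOn_mono G (stSet_compl_subset G v))

/-! The weight a point of `I_G` puts on `v` can be slid linearly onto `w`. Whenever a face `σ`
contains `v`, the set `σ ∪ {w}` is again a face: a neighbour of `w` is a neighbour of `v`, and
`v`, `w` are not adjacent. So the straight-line homotopy stays in `I_G`, and at time `1` it
lands in `I_{G - v}`, on which it is the identity throughout. -/

namespace AbsSimplicialComplex

variable {V : Type*}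

def deletion (K : AbsSimplicialComplex V) (v : V) : AbsSimplicialComplex V where
  faces := {s | s ∈ K.faces ∧ v ∉ s}
  down_closed _ hs _ ht := ⟨K.down_closed hs.1 ht, fun hv => hs.2 (ht hv)⟩

variable {K : AbsSimplicialComplex V} {v w : V}

lemma deletion_faces_subset : (K.deletion v).faces ⊆ K.faces := fun _ hs => hs.1

lemma deletion_space_apply_self (g : (K.deletion v).space) : g.1 v = 0 := by
  obtain ⟨s, hs, hsupp, -⟩ := g.2.2
  exact hsupp v hs.2

def codRestrictDeletion {X : Type*} [TopologicalSpace X] (φ : C(X, K.space))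
    (hφ : ∀ x, (φ x).1 v = 0) : C(X, (K.deletion v).space) where
  toFun x := ⟨(φ x).1, (φ x).2.1, by
    classical
    obtain ⟨s, hs, hsupp, hsum⟩ := (φ x).2.2
    refine ⟨s.erase v, ⟨K.down_closed hs (s.erase_subset v), s.notMem_erase v⟩,
      fun y hy => ?_, by rwa [Finset.sum_erase _ (hφ x)]⟩
    by_cases hyv : y = v
    · rw [hyv, hφ x]
    · exact hsupp y fun hys => hy (Finset.mem_erase.2 ⟨hyv, hys⟩)⟩
  continuous_toFun := (continuous_subtype_val.comp φ.continuous).subtype_mk _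

variable [DecidableEq V]

def pushWeight (v w : V) (t : ℝ) (f : V → ℝ) : V → ℝ :=
  f + (t * f v) • (Pi.single w 1 - Pi.single v 1)

section pushWeight

variable {t : ℝ} {f : V → ℝ}

lemma pushWeight_apply (x : V) :
    pushWeight v w t f x =
      f x + t * f v * ((Pi.single w 1 : V → ℝ) x - (Pi.single v 1 : V → ℝ) x) :=
  rfl

lemma pushWeight_of_apply_self_eq_zero (h : f v = 0) : pushWeight v w t f = f := by
  simp [pushWeight, h]

lemma pushWeight_zero : pushWeight v w 0 f = f := by
  simp [pushWeight]

lemma pushWeight_apply_self (hvw : v ≠ w) : pushWeight v w t f v = (1 - t) * f v := by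
  rw [pushWeight_apply, Pi.single_eq_of_ne hvw, Pi.single_eq_same]
  ring

lemma pushWeight_nonneg (hvw : v ≠ w) (ht : t ∈ Set.Icc (0 : ℝ) 1) (hf : ∀ x, 0 ≤ f x)
    (x : V) : 0 ≤ pushWeight v w t f x := by
  obtain ⟨ht0, ht1⟩ := ht
  by_cases hxv : x = v
  · rw [hxv, pushWeight_apply_self hvw]
    exact mul_nonneg (sub_nonneg.2 ht1) (hf v)
  · rw [pushWeight_apply, Pi.single_apply, Pi.single_apply, if_neg hxv]
    split_ifs
    · nlinarith [hf x, hf v]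
    · simpa using hf x

lemma pushWeight_eq_zero_of_notMem {s : Finset V} (hsupp : ∀ x ∉ s, f x = 0) {x : V}
    (hx : x ∉ insert w s) : pushWeight v w t f x = 0 := by
  rw [Finset.mem_insert, not_or] at hx
  have hfx : f x = 0 := hsupp x hx.2
  by_cases hxv : x = v
  · subst hxv
    rw [pushWeight_of_apply_self_eq_zero hfx, hfx]
  · simp [pushWeight_apply, hx.1, hxv, hfx]

lemma sum_pushWeight {s : Finset V} (hv : v ∈ s) (hw : w ∈ s) :
    ∑ x ∈ s, pushWeight v w t f x = ∑ x ∈ s, f x := by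
  simp [pushWeight_apply, Finset.sum_add_distrib, ← Finset.mul_sum, Finset.sum_sub_distrib,
    Pi.single_apply, hv, hw]

end pushWeight

variable (hvw : v ≠ w) (hpush : ∀ s ∈ K.faces, v ∈ s → insert w s ∈ K.faces)
include hvw hpush

def pushPoint (t : I) (g : K.space) : K.space :=
  ⟨pushWeight v w t g.1, pushWeight_nonneg hvw t.2 g.2.1, by
    obtain ⟨s, hs, hsupp, hsum⟩ := g.2.2
    by_cases hv : v ∈ s
    · refine ⟨insert w s, hpush s hs hv, fun x hx => pushWeight_eq_zero_of_notMem hsupp hx, ?_⟩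
      rw [sum_pushWeight (Finset.mem_insert_of_mem hv) (Finset.mem_insert_self w s),
        Finset.sum_insert_of_eq_zero_if_notMem (hsupp w), hsum]
    · rw [pushWeight_of_apply_self_eq_zero (hsupp v hv)]
      exact ⟨s, hs, hsupp, hsum⟩⟩

lemma continuous_pushPoint :
    Continuous fun p : I × K.space => pushPoint hvw hpush p.1 p.2 := by
  have hval : Continuous fun p : I × K.space => p.2.1 :=
    continuous_subtype_val.comp continuous_snd
  have htime : Continuous fun p : I × K.space => (p.1 : ℝ) :=
    continuous_subtype_val.comp continuous_fst
  refine Continuous.subtype_mk (continuous_pi fun x => ?_) _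
  exact ((continuous_apply x).comp hval).add
    ((htime.mul ((continuous_apply v).comp hval)).mul continuous_const)

def deletionRetraction : C(K.space, (K.deletion v).space) :=
  codRestrictDeletion ⟨pushPoint hvw hpush 1, (continuous_pushPoint hvw hpush).comp
    (Continuous.prodMk_right 1)⟩ fun g => by
      simp [pushPoint, pushWeight_apply_self hvw]

def homotopyEquivDeletion : ContinuousMap.HomotopyEquiv K.space (K.deletion v).space where
  toFun := deletionRetraction hvw hpush
  invFun := inclMap _ _ deletion_faces_subset
  left_inv := ⟨ContinuousMap.Homotopy.symm
    { toFun p := pushPoint hvw hpush p.1 p.2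
      continuous_toFun := continuous_pushPoint hvw hpush
      map_zero_left _ := Subtype.ext pushWeight_zero
      map_one_left _ := rfl }⟩
  right_inv := by
    convert ContinuousMap.Homotopic.refl _
    refine ContinuousMap.ext fun g => Subtype.ext ?_
    exact (pushWeight_of_apply_self_eq_zero (deletion_space_apply_self g)).symm

end AbsSimplicialComplex

section Independence

variable {V : Type*} {G : SimpleGraph V} {v w : V}

lemma indepComplexOn_compl_singleton :
    indepComplexOn G {v}ᶜ = (indepComplex G).deletion v := by
  simp only [indepComplexOn, indepComplex, AbsSimplicialComplex.deletion,
    AbsSimplicialComplex.mk.injEq]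
  ext s
  simp [Set.subset_compl_singleton_iff, and_comm]

lemma insert_mem_indepComplex_of_dominates [DecidableEq V]
    (hdom : ∀ x, G.Adj w x → G.Adj v x ∨ x = v ∨ x = w) (hadj : ¬ G.Adj v w)
    {s : Finset V} (hs : s ∈ (indepComplex G).faces) (hv : v ∈ s) :
    insert w s ∈ (indepComplex G).faces := by
  have hw : ∀ x ∈ s, ¬ G.Adj w x := fun x hx hwx => by
    rcases hdom x hwx with hvx | rfl | rfl
    exacts [hs.2 v hv x hx hvx, hadj hwx.symm, G.irrefl hwx]
  refine ⟨fun x _ => Set.mem_univ x, ?_⟩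
  simp only [Finset.mem_insert]
  rintro a (rfl | ha) b (rfl | hb)
  exacts [G.irrefl, hw b hb, fun h => hw a ha h.symm, hs.2 a ha b hb]

end Independence

theorem domination_nonadjacent_general {V : Type}
    (G : SimpleGraph V) (v w : V) (hvw : v ≠ w)
    (hdom : ∀ x, G.Adj w x → G.Adj v x ∨ x = v ∨ x = w)
    (hadj : ¬ G.Adj v w) :
    Nonempty (ContinuousMap.HomotopyEquiv (indepComplex G).space
      (indepComplexOn G ({v} : Set V)ᶜ).space) := by
  classical
  rw [indepComplexOn_compl_singleton]
  exact ⟨(indepComplex G).homotopyEquivDeletion hvw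
    fun _ hs hv => insert_mem_indepComplex_of_dominates hdom hadj hs hv⟩

/-- Domination Lemma, non-adjacent case: if `v` dominates `w` and `v`
is not adjacent to `w`, then `I_G ≃ I_{G−v}`. -/
theorem domination_nonadjacent {V : Type} [Fintype V] [DecidableEq V]
    (G : SimpleGraph V) (v w : V) (hvw : v ≠ w)
    (hdom : ∀ x, G.Adj w x → G.Adj v x ∨ x = v ∨ x = w)
    (hadj : ¬ G.Adj v w) :
    Nonempty (ContinuousMap.HomotopyEquiv (indepComplex G).space
      (indepComplexOn G ({v} : Set V)ᶜ).space) :=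
  domination_nonadjacent_general G v w hvw hdom hadj
end

section
/- Let T be a finite tree containing a vertex x such that the length of every path from x to a leaf is divisible by 3. Then the independence complex I_T is contractible. -/
open scoped unitInterval

/-!
Root the tree at `x` and shrink the vertex set `A`. Let `y` be a vertex of `A` farthest from
`x`. Either `y` has no neighbour in `A`, and `I_A` is a cone with apex `y`, or `y` is a leaf of
`G[A]` hanging from its parent `v`. Then `I_A` is the union of the cone with apex `y` over
`I_{A - v}` and the cone with apex `v` over the link `I_{A - N[v]}`, so a contraction of the link
extends to one of `I_A`: run the contraction inside the cone on `v`, push all weight off `v`,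
and slide onto `y`. Removing `N[v]` keeps the hypothesis that vertices without children in `A`
lie at depth divisible by 3: the only vertex that can lose its last child is the grandparent
of `v`, at depth `d(y) - 3`.
-/

open Function (support)

noncomputable section

namespace AbsSimplicialComplex

variable {V : Type*}

def IsPoint (K : AbsSimplicialComplex V) (f : V → ℝ) : Prop :=
  (∀ x, 0 ≤ f x) ∧ ∃ s ∈ K.faces, (∀ x, x ∉ s → f x = 0) ∧ ∑ x ∈ s, f x = 1

-- `K.space` is a subtype only after unfolding, which makes `Subtype.val` on it opaque to `rw` and
-- `simp`; points are therefore coerced to weight functions through `FunLike`.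
instance (K : AbsSimplicialComplex V) : FunLike K.space V ℝ where
  coe p := p.1
  coe_injective := Subtype.val_injective

@[ext]
lemma ext {K L : AbsSimplicialComplex V} (h : K.faces = L.faces) : K = L := by
  cases K; cases L; congr

namespace space

variable {K : AbsSimplicialComplex V}

def mk (f : V → ℝ) (hf : K.IsPoint f) : K.space := ⟨f, hf⟩

@[simp]
lemma coe_mk (f : V → ℝ) (hf : K.IsPoint f) : ⇑(mk f hf) = f := rfl

lemma coe_injective : Function.Injective (fun p : K.space => (p : V → ℝ)) :=
  DFunLike.coe_injective

lemma isInducing_coe : Topology.IsInducing (fun p : K.space => (p : V → ℝ)) :=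
  Topology.IsInducing.subtypeVal

@[fun_prop]
lemma continuous_coe : Continuous (fun p : K.space => (p : V → ℝ)) :=
  isInducing_coe.continuous

lemma continuous_apply (v : V) : Continuous (fun p : K.space => p v) :=
  (_root_.continuous_apply v).comp continuous_coe

lemma nonneg (p : K.space) (x : V) : 0 ≤ p x := p.2.1 x

lemma exists_support_subset (p : K.space) : ∃ s ∈ K.faces, support p ⊆ s := by
  obtain ⟨-, s, hs, h0, -⟩ := p.2
  exact ⟨s, hs, fun x hx => by_contra fun h => hx (h0 x h)⟩

end space

section DecidableEq

variable [DecidableEq V]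

def link (K : AbsSimplicialComplex V) (v : V) : AbsSimplicialComplex V where
  faces := {s | v ∉ s ∧ insert v s ∈ K.faces}
  down_closed _ hs _ ht :=
    ⟨fun hv => hs.1 (ht hv), K.down_closed hs.2 (Finset.insert_subset_insert _ ht)⟩

lemma link_faces_subset {K : AbsSimplicialComplex V} {v : V} : (K.link v).faces ⊆ K.faces :=
  fun _ hs => K.down_closed hs.2 (Finset.subset_insert _ _)

lemma single_one_nonneg (w x : V) : 0 ≤ (Pi.single w 1 : V → ℝ) x :=
  (Pi.single_nonneg.2 zero_le_one : (0 : V → ℝ) ≤ _) x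

lemma single_one_le_one (w x : V) : (Pi.single w 1 : V → ℝ) x ≤ 1 := by
  rw [Pi.single_apply]; split_ifs <;> norm_num

def linkCoord (v : V) (f : V → ℝ) : V → ℝ := (1 - f v)⁻¹ • (f - f v • Pi.single v 1)

variable {v : V}

lemma linkCoord_apply (f : V → ℝ) (x : V) :
    linkCoord v f x = if x = v then 0 else f x / (1 - f v) := by
  by_cases hx : x = v <;> simp [linkCoord, hx, div_eq_inv_mul]

lemma linkCoord_of_eq_zero {f : V → ℝ} (h : f v = 0) : linkCoord v f = f := by
  simp [linkCoord, h]

lemma smul_single_add_linkCoord {f : V → ℝ} (h : f v ≠ 1) :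
    f v • Pi.single v 1 + (1 - f v) • linkCoord v f = f := by
  simp [linkCoord, smul_smul, mul_inv_cancel₀ (sub_ne_zero.2 h.symm)]

lemma continuousAt_linkCoord {f : V → ℝ} (h : f v ≠ 1) : ContinuousAt (linkCoord v) f :=
  ((continuousAt_const.sub (_root_.continuous_apply v).continuousAt).inv₀
    (sub_ne_zero.2 h.symm)).smul
    (continuousAt_id.sub ((_root_.continuous_apply v).continuousAt.smul continuousAt_const))

end DecidableEq

section Fintype

variable [Fintype V] {K : AbsSimplicialComplex V}

lemma isPoint_of_support_subset {f : V → ℝ} (hf0 : ∀ x, 0 ≤ f x) (hf1 : ∑ x, f x = 1)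
    {s : Finset V} (hs : s ∈ K.faces) (hfs : support f ⊆ s) : K.IsPoint f := by
  refine ⟨hf0, s, hs, fun x hx => Function.notMem_support.1 fun h => hx (hfs h), ?_⟩
  rw [← hf1]
  exact Finset.sum_subset (Finset.subset_univ s) fun x _ hx =>
    Function.notMem_support.1 fun h => hx (hfs h)

lemma space.sum_eq_one (p : K.space) : ∑ x, p x = 1 := by
  obtain ⟨-, s, -, h0, h1⟩ := p.2
  exact (Finset.sum_subset (Finset.subset_univ s) fun x _ hx => h0 x hx).symm.trans h1

lemma space.le_one (p : K.space) (x : V) : p x ≤ 1 :=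
  (Finset.single_le_sum (fun y _ => p.nonneg y) (Finset.mem_univ x)).trans_eq p.sum_eq_one

variable [DecidableEq V]

lemma space.eq_single_of_apply_eq_one {p : K.space} {v : V} (h : p v = 1) :
    ⇑p = Pi.single v 1 := by
  have hrest := p.sum_eq_one
  rw [← Finset.add_sum_erase _ _ (Finset.mem_univ v), h, add_eq_left,
    Finset.sum_eq_zero_iff_of_nonneg fun x _ => p.nonneg x] at hrest
  ext x
  by_cases hx : x = v
  · simp [hx, h]
  · simp [hx, hrest x (Finset.mem_erase.2 ⟨hx, Finset.mem_univ x⟩)]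

lemma isPoint_smul_single_add {w : V} {a : ℝ} (ha : a ∈ I) {q : V → ℝ} (hq0 : ∀ x, 0 ≤ q x)
    (hq1 : ∑ x, q x = 1) {s : Finset V} (hs : insert w s ∈ K.faces) (hqs : support q ⊆ s) :
    K.IsPoint (a • Pi.single w 1 + (1 - a) • q) := by
  refine isPoint_of_support_subset (fun x => ?_) ?_ hs ?_
  · have := single_one_nonneg w x
    have := hq0 x
    have := ha.1
    have := ha.2
    simp only [Pi.add_apply, Pi.smul_apply, smul_eq_mul]
    positivity
  · simp [Finset.sum_add_distrib, ← Finset.mul_sum, hq1]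
  · refine (Function.support_add _ _).trans (Set.union_subset ?_ ?_)
    · exact (Function.support_smul_subset_right _ _).trans (by simp)
    · exact (Function.support_smul_subset_right _ _).trans (hqs.trans (by simp))

lemma dist_smul_single_add_le {w : V} {a : ℝ} (ha : a ≤ 1) {q : V → ℝ}
    (hq : ∀ x, q x ∈ I) : dist (a • Pi.single w 1 + (1 - a) • q) (Pi.single w 1) ≤ 1 - a := by
  refine (dist_pi_le_iff (by linarith)).2 fun x => ?_
  have := single_one_nonneg w x
  have := single_one_le_one w x
  calc dist _ _ = |(1 - a) * (q x - (Pi.single w 1 : V → ℝ) x)| := by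
        rw [Real.dist_eq]; congr 1; simp only [Pi.add_apply, Pi.smul_apply, smul_eq_mul]; ring
    _ = (1 - a) * |q x - (Pi.single w 1 : V → ℝ) x| := by
        rw [abs_mul, abs_of_nonneg (by linarith)]
    _ ≤ 1 - a := mul_le_of_le_one_right (by linarith)
        (abs_sub_le_iff.2 ⟨by linarith [(hq x).2], by linarith [(hq x).1]⟩)

def vertex {u : V} (hu : {u} ∈ K.faces) : K.space :=
  .mk (Pi.single u 1) (isPoint_of_support_subset (single_one_nonneg u) (by simp) hu (by simp))

theorem homotopic_const_vertex {X : Type*} [TopologicalSpace X] {u : V} (hu : {u} ∈ K.faces)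
    (F : C(X, K.space)) (hF : ∀ x, ∃ s, insert u s ∈ K.faces ∧ support (F x) ⊆ s) :
    F.Homotopic (ContinuousMap.const X (vertex hu)) :=
  ⟨{toFun := fun z => .mk ((z.1 : ℝ) • Pi.single u 1 + (1 - (z.1 : ℝ)) • ⇑(F z.2))
      ((hF z.2).elim fun _ hs => isPoint_smul_single_add z.1.2 (F z.2).nonneg
        (F z.2).sum_eq_one hs.1 hs.2)
    continuous_toFun := space.isInducing_coe.continuous_iff.2 (by
      simp only [Function.comp_def, space.coe_mk]; fun_prop)
    map_zero_left := fun x => space.coe_injective (by simp)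
    map_one_left := fun x => space.coe_injective (by simp [vertex]) }⟩

theorem contractibleSpace_of_forall_insert_mem {u : V} (hu : {u} ∈ K.faces)
    (hcone : ∀ s ∈ K.faces, insert u s ∈ K.faces) : ContractibleSpace K.space :=
  (contractible_iff_id_nullhomotopic _).2 ⟨_, homotopic_const_vertex hu (ContinuousMap.id _)
    fun p => p.exists_support_subset.imp fun s hs => ⟨hcone s hs.1, hs.2⟩⟩

variable {v : V}

variable (v) in
def conePoint (a : ℝ) (ha : a ∈ I) (q : (K.link v).space) : K.space :=
  .mk (a • Pi.single v 1 + (1 - a) • ⇑q) (q.exists_support_subset.elim fun _ hs =>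
    isPoint_smul_single_add ha q.nonneg q.sum_eq_one hs.1.2 hs.2)

lemma isPoint_linkCoord (f : K.space) (h0 : 0 < f v) (h1 : f v < 1) :
    (K.link v).IsPoint (linkCoord v f) := by
  obtain ⟨s, hs, hfs⟩ := f.exists_support_subset
  have hvs : v ∈ s := hfs h0.ne'
  refine isPoint_of_support_subset (s := s.erase v) (fun x => ?_) ?_
    ⟨Finset.notMem_erase v s, by rwa [Finset.insert_erase hvs]⟩ fun x hx => ?_
  · rw [linkCoord_apply]
    split_ifs
    exacts [le_rfl, div_nonneg (f.nonneg x) (by linarith)]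
  · simp [linkCoord, Finset.sum_sub_distrib, ← Finset.mul_sum, f.sum_eq_one,
      inv_mul_cancel₀ (sub_ne_zero.2 h1.ne')]
  · rw [Function.mem_support, linkCoord_apply] at hx
    split_ifs at hx with hxv
    · exact absurd rfl hx
    · exact Finset.mem_erase.2 ⟨hxv, hfs fun h => hx (by simp [h])⟩

def cutoff (s : ℝ) : I := Set.projIcc 0 1 zero_le_one (3 * s - 1)

lemma cutoff_of_le {s : ℝ} (h : s ≤ 1 / 3) : cutoff s = 0 :=
  Set.projIcc_of_le_left _ (by linarith)

lemma cutoff_of_ge {s : ℝ} (h : 2 / 3 ≤ s) : cutoff s = 1 :=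
  Set.projIcc_of_right_le _ (by linarith)

lemma continuous_cutoff : Continuous cutoff :=
  continuous_projIcc.comp (by fun_prop)

variable {p₀ : (K.link v).space} (c : (ContinuousMap.id _).Homotopy (ContinuousMap.const _ p₀))

def contractLinkCoord (τ : I) (f : K.space) : (K.link v).space :=
  if h : 0 < f v ∧ f v < 1 then
    c (cutoff (f v) * τ, .mk (linkCoord v f) (isPoint_linkCoord f h.1 h.2))
  else p₀

/-- Writing `f = s • δ_v + (1 - s) • g` with `g = linkCoord v f` in the link (taken to be `p₀` at
the apex `s = 1`), `deform c a τ f` scales the weight `s` on `v` by `a` and moves `g` along the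
contraction `c` for time `cutoff s * τ`. The cutoff vanishes for `s ≤ 1/3`, where `g` degenerates
as `s → 0`, and is `1` for `s ≥ 2/3`, so that for `τ = 1` the link coordinate near the apex is
already the constant `p₀`. -/
def deform (a τ : I) (f : K.space) : K.space :=
  if f v = 0 then f
  else conePoint v _ (unitInterval.mul_mem a.2 ⟨f.nonneg v, f.le_one v⟩) (contractLinkCoord c τ f)

lemma deform_of_lt_third {a τ : I} {f : K.space} (h : f v < 1 / 3) :
    ⇑(deform c a τ f) = ((a : ℝ) * f v) • Pi.single v 1 + (1 - a * f v) • linkCoord v f := by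
  unfold deform
  split_ifs with h0
  · simp [h0, linkCoord_of_eq_zero h0]
  · have hpos : 0 < f v ∧ f v < 1 := ⟨(f.nonneg v).lt_of_ne' h0, by linarith⟩
    simp [conePoint, contractLinkCoord, hpos, cutoff_of_le h.le]

lemma deform_of_gt_two_thirds {a : I} {f : K.space} (h : 2 / 3 < f v) :
    ⇑(deform c a 1 f) = ((a : ℝ) * f v) • Pi.single v 1 + (1 - a * f v) • ⇑p₀ := by
  have h0 : f v ≠ 0 := by linarith
  by_cases h1 : f v < 1
  · simp [deform, conePoint, contractLinkCoord, h0, h1, (by linarith : 0 < f v),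
      cutoff_of_ge h.le]
  · simp [deform, conePoint, contractLinkCoord, h0, h1]

lemma dist_deform_one_single_le (τ : I) (f : K.space) :
    dist (⇑(deform c 1 τ f)) (Pi.single v 1) ≤ 1 - f v := by
  unfold deform
  split_ifs with h0
  · simpa [h0] using dist_smul_single_add_le (w := v) zero_le_one
      fun x => ⟨f.nonneg x, f.le_one x⟩
  · simpa [conePoint] using dist_smul_single_add_le (f.le_one v)
      fun x => ⟨(contractLinkCoord c τ f).nonneg x, (contractLinkCoord c τ f).le_one x⟩

lemma deform_one_zero (f : K.space) : deform c 1 0 f = f := by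
  refine space.coe_injective ?_
  by_cases h0 : f v = 0
  · simp [deform, h0]
  by_cases h1 : f v < 1
  · have hpos : 0 < f v ∧ f v < 1 := ⟨(f.nonneg v).lt_of_ne' h0, h1⟩
    simp [deform, conePoint, contractLinkCoord, h0, hpos, smul_single_add_linkCoord h1.ne]
  · have hf : f v = 1 := le_antisymm (f.le_one v) (not_lt.1 h1)
    simp [deform, conePoint, contractLinkCoord, hf, space.eq_single_of_apply_eq_one hf]

lemma exists_insert_mem_support_deform_zero {u : V}
    (hcone : ∀ s ∈ K.faces, v ∉ s → insert u s ∈ K.faces) (f : K.space) :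
    ∃ s, insert u s ∈ K.faces ∧ support (deform c 0 1 f) ⊆ s := by
  by_cases h0 : f v = 0
  · obtain ⟨t, ht, hft⟩ := f.exists_support_subset
    refine ⟨t.erase v, hcone _ (K.down_closed ht (t.erase_subset v)) (t.notMem_erase v), ?_⟩
    simp only [deform, h0, if_true, Finset.coe_erase]
    exact fun x hx => ⟨hft hx, fun hxv => hx (by rw [hxv]; exact h0)⟩
  · obtain ⟨t, ht, hqt⟩ := (contractLinkCoord c 1 f).exists_support_subset
    exact ⟨t, hcone t (link_faces_subset ht) ht.1, by simpa [deform, conePoint, h0] using hqt⟩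

variable {Z : Type*} [TopologicalSpace Z] {a τ : Z → I} {F : Z → K.space} {z : Z}

theorem continuousAt_deform_of_lt_third (ha : Continuous a) (hF : Continuous F)
    (hz : F z v < 1 / 3) : ContinuousAt (fun z => deform c (a z) (τ z) (F z)) z := by
  rw [space.isInducing_coe.continuousAt_iff]
  refine ContinuousAt.congr (f := fun z => ((a z : ℝ) * F z v) • Pi.single v 1 +
      (1 - a z * F z v) • linkCoord v (F z)) ?_ ?_
  · have := (continuousAt_linkCoord (by linarith : F z v ≠ 1)).comp (f := fun z => ⇑(F z))
      (space.continuous_coe.comp hF).continuousAt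
    have : Continuous fun z => (a z : ℝ) := continuous_subtype_val.comp ha
    have := (space.continuous_apply v).comp hF
    fun_prop
  · filter_upwards [(isOpen_lt ((space.continuous_apply v).comp hF) continuous_const).mem_nhds hz]
      with z' hz'
    exact (deform_of_lt_third c hz').symm

theorem continuousAt_deform_of_mem_Ioo (ha : Continuous a) (hτ : Continuous τ)
    (hF : Continuous F) (hz : F z v ∈ Set.Ioo 0 1) :
    ContinuousAt (fun z => deform c (a z) (τ z) (F z)) z := by
  have hFv : Continuous fun z => F z v := (space.continuous_apply v).comp hF
  set U := {z | F z v ∈ Set.Ioo 0 1}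
  have hU : IsOpen U := isOpen_Ioo.preimage hFv
  have hlink : ContinuousOn (fun z => contractLinkCoord c (τ z) (F z)) U := by
    rw [continuousOn_iff_continuous_domRestrict]
    have hcoord : Continuous fun x : U =>
        (space.mk (linkCoord v (F x)) (isPoint_linkCoord (F x) x.2.1 x.2.2) : (K.link v).space) :=
      space.isInducing_coe.continuous_iff.2 <| continuous_iff_continuousAt.2 fun x =>
        (continuousAt_linkCoord x.2.2.ne).comp (f := fun x : U => ⇑(F x))
          (space.continuous_coe.comp (hF.comp continuous_subtype_val)).continuousAt
    have hcut : Continuous fun x : U => cutoff (F x v) :=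
      continuous_cutoff.comp (hFv.comp continuous_subtype_val)
    refine (c.continuous.comp ((hcut.mul (hτ.comp continuous_subtype_val)).prodMk hcoord)).congr
      fun x => ?_
    simp [contractLinkCoord, x.2.1, x.2.2]
  rw [space.isInducing_coe.continuousAt_iff]
  refine ContinuousAt.congr (f := fun z => ((a z : ℝ) * F z v) • Pi.single v 1 +
      (1 - a z * F z v) • ⇑(contractLinkCoord c (τ z) (F z))) ?_ ?_
  · have := space.continuous_coe.continuousAt.comp (hlink.continuousAt (hU.mem_nhds hz))
    have : Continuous fun z => (a z : ℝ) := continuous_subtype_val.comp ha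
    fun_prop
  · filter_upwards [hU.mem_nhds hz] with z' hz'
    simp [deform, conePoint, hz'.1.ne']

theorem continuousAt_deform_of_gt_two_thirds (ha : Continuous a) (hF : Continuous F)
    (hz : 2 / 3 < F z v) : ContinuousAt (fun z => deform c (a z) 1 (F z)) z := by
  have hFv : Continuous fun z => F z v := (space.continuous_apply v).comp hF
  rw [space.isInducing_coe.continuousAt_iff]
  refine ContinuousAt.congr (f := fun z => ((a z : ℝ) * F z v) • Pi.single v 1 +
      (1 - a z * F z v) • ⇑p₀) ?_ ?_
  · have : Continuous fun z => (a z : ℝ) := continuous_subtype_val.comp ha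
    fun_prop
  · filter_upwards [(isOpen_lt continuous_const hFv).mem_nhds hz] with z' hz'
    exact (deform_of_gt_two_thirds c hz').symm

theorem continuousAt_deform_of_eq_one (hF : Continuous F) (hz : F z v = 1) :
    ContinuousAt (fun z => deform c 1 (τ z) (F z)) z := by
  have hbound z' : dist (⇑(deform c 1 (τ z') (F z'))) (Pi.single v 1) ≤ 1 - F z' v :=
    dist_deform_one_single_le c _ _
  have hz' : ⇑(deform c 1 (τ z) (F z)) = Pi.single v 1 :=
    dist_le_zero.1 ((hbound z).trans_eq (by rw [hz, sub_self]))
  rw [space.isInducing_coe.continuousAt_iff, ContinuousAt, Function.comp_apply, hz',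
    tendsto_iff_dist_tendsto_zero]
  refine squeeze_zero (fun _ => dist_nonneg) hbound ?_
  simpa [hz] using (((space.continuous_apply v).comp hF).tendsto z).const_sub 1

lemma continuous_deform_one : Continuous fun z : I × K.space => deform c 1 z.1 z.2 := by
  refine continuous_iff_continuousAt.2 fun z => ?_
  rcases lt_or_ge (z.2 v) (1 / 3) with h | h
  · exact continuousAt_deform_of_lt_third c continuous_const continuous_snd h
  rcases (z.2.le_one v).lt_or_eq with h' | h'
  · exact continuousAt_deform_of_mem_Ioo c continuous_const continuous_fst continuous_snd
      ⟨by linarith, h'⟩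
  · exact continuousAt_deform_of_eq_one c continuous_snd h'

lemma continuous_deform_symm :
    Continuous fun z : I × K.space => deform c (unitInterval.symm z.1) 1 z.2 := by
  have hσ : Continuous fun z : I × K.space => unitInterval.symm z.1 := by fun_prop
  refine continuous_iff_continuousAt.2 fun z => ?_
  rcases lt_or_ge (z.2 v) (1 / 3) with h | h
  · exact continuousAt_deform_of_lt_third c hσ continuous_snd h
  rcases lt_or_ge (z.2 v) 1 with h' | h'
  · exact continuousAt_deform_of_mem_Ioo c hσ continuous_const continuous_snd ⟨by linarith, h'⟩
  · exact continuousAt_deform_of_gt_two_thirds c hσ continuous_snd (by linarith)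

theorem contractibleSpace_of_link {u : V} (hcone : ∀ s ∈ K.faces, v ∉ s → insert u s ∈ K.faces)
    [ContractibleSpace (K.link v).space] : ContractibleSpace K.space := by
  obtain ⟨p₀, ⟨c⟩⟩ := (contractible_iff_id_nullhomotopic (K.link v).space).1 ‹_›
  obtain ⟨t, ht, -⟩ := p₀.exists_support_subset
  have hu : {u} ∈ K.faces := by
    simpa using
      hcone ∅ (K.down_closed (link_faces_subset ht) t.empty_subset) (Finset.notMem_empty v)
  have hE (a : I) : Continuous (deform c a 1) := by
    simpa [Function.comp_def] using (continuous_deform_symm c).comp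
      ((continuous_const (y := unitInterval.symm a)).prodMk continuous_id)
  let E (a : I) : C(K.space, K.space) := ⟨deform c a 1, hE a⟩
  have H₁ : (ContinuousMap.id K.space).Homotopic (E 1) := ⟨{
    toFun := fun z => deform c 1 z.1 z.2
    continuous_toFun := continuous_deform_one c
    map_zero_left := deform_one_zero c
    map_one_left := fun _ => rfl }⟩
  have H₂ : (E 1).Homotopic (E 0) := ⟨{
    toFun := fun z => deform c (unitInterval.symm z.1) 1 z.2
    continuous_toFun := continuous_deform_symm c
    map_zero_left := fun _ => by simp [E]
    map_one_left := fun _ => by simp [E] }⟩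
  exact (contractible_iff_id_nullhomotopic _).2 ⟨vertex hu, H₁.trans <| H₂.trans <|
    homotopic_const_vertex hu (E 0) (exists_insert_mem_support_deform_zero c hcone)⟩

end Fintype

end AbsSimplicialComplex

end

section IndependenceComplex

variable {V : Type*} [DecidableEq V] {G : SimpleGraph V} {A : Set V} {u v : V}

lemma indepComplexOn_link (hv : v ∈ A) :
    (indepComplexOn G A).link v = indepComplexOn G (A \ stSet G v) := by
  ext s
  simp only [AbsSimplicialComplex.link, indepComplexOn, stSet, Set.mem_ofPred_eq,
    Finset.mem_insert, Set.subset_def, Finset.mem_coe, Set.mem_sdiff, Set.mem_insert_iff,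
    SimpleGraph.mem_neighborSet]
  constructor
  · rintro ⟨hvs, hsA, hind⟩
    refine ⟨fun x hx => ⟨hsA x (.inr hx), ?_⟩, fun a ha b hb => hind a (.inr ha) b (.inr hb)⟩
    rintro (rfl | hvx)
    exacts [hvs hx, hind v (.inl rfl) x (.inr hx) hvx]
  · rintro ⟨hsA, hind⟩
    refine ⟨fun hvs => (hsA v hvs).2 (.inl rfl), ?_, ?_⟩
    · rintro x (rfl | hx)
      exacts [hv, (hsA x hx).1]
    rintro a (rfl | ha) b (rfl | hb) hab
    · exact G.irrefl hab
    · exact (hsA b hb).2 (.inr hab)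
    · exact (hsA a ha).2 (.inr hab.symm)
    · exact hind a ha b hb hab

lemma insert_mem_indepComplexOn (hu : u ∈ A) {s : Finset V}
    (hs : s ∈ (indepComplexOn G A).faces) (hus : ∀ w ∈ s, ¬ G.Adj u w) :
    insert u s ∈ (indepComplexOn G A).faces := by
  refine ⟨by simpa [Set.insert_subset_iff] using ⟨hu, hs.1⟩, ?_⟩
  simp only [Finset.mem_insert]
  rintro a (rfl | ha) b (rfl | hb) hab
  · exact G.irrefl hab
  · exact hus b hb hab
  · exact hus a ha hab.symm
  · exact hs.2 a ha b hb hab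

variable [Fintype V]

theorem contractibleSpace_indepComplexOn_of_isolated (hu : u ∈ A)
    (hiso : ∀ w ∈ A, ¬ G.Adj u w) : ContractibleSpace (indepComplexOn G A).space :=
  AbsSimplicialComplex.contractibleSpace_of_forall_insert_mem (u := u)
    (by simpa using insert_mem_indepComplexOn hu (s := ∅) ⟨by simp, by simp⟩ (by simp))
    fun s hs => insert_mem_indepComplexOn hu hs fun w hw => hiso w (hs.1 hw)

theorem contractibleSpace_indepComplexOn_of_leaf (hu : u ∈ A) (hv : v ∈ A)
    (hleaf : ∀ w ∈ A, G.Adj u w → w = v)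
    [ContractibleSpace (indepComplexOn G (A \ stSet G v)).space] :
    ContractibleSpace (indepComplexOn G A).space := by
  have : ContractibleSpace ((indepComplexOn G A).link v).space := by
    rwa [indepComplexOn_link hv]
  exact AbsSimplicialComplex.contractibleSpace_of_link (u := u) fun s hs hvs =>
    insert_mem_indepComplexOn hu hs fun w hw hadj => hvs (hleaf w (hs.1 hw) hadj ▸ hw)

end IndependenceComplex

namespace SimpleGraph

variable {V : Type*} {G : SimpleGraph V}

def ChildlessDistDvdThree (G : SimpleGraph V) (x : V) (A : Set V) : Prop :=
  ∀ y ∈ A, (∀ c ∈ A, G.Adj y c → G.dist x c < G.dist x y) → 3 ∣ G.dist x y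

namespace IsTree

lemma eq_of_adj_of_dist_add_one (hG : G.IsTree) (x : V) {y w₁ w₂ : V} (h₁ : G.Adj w₁ y)
    (h₂ : G.Adj w₂ y) (hd₁ : G.dist x w₁ + 1 = G.dist x y) (hd₂ : G.dist x w₂ + 1 = G.dist x y) :
    w₁ = w₂ := by
  obtain ⟨q₁, hq₁⟩ := hG.connected.exists_walk_length_eq_dist x w₁
  obtain ⟨q₂, hq₂⟩ := hG.connected.exists_walk_length_eq_dist x w₂
  have hp₁ := (q₁.concat h₁).isPath_of_length_eq_dist (by simp [hq₁, hd₁])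
  have hp₂ := (q₂.concat h₂).isPath_of_length_eq_dist (by simp [hq₂, hd₂])
  simpa using congrArg (fun p : G.Path x y => p.1.penultimate)
    ((hG.isAcyclic.subsingleton_path x y).elim ⟨_, hp₁⟩ ⟨_, hp₂⟩)

lemma childlessDistDvdThree_sdiff_stSet (hG : G.IsTree) {x v : V} {A : Set V}
    (hA : G.ChildlessDistDvdThree x A) (hv : 3 ∣ G.dist x v + 1) :
    G.ChildlessDistDvdThree x (A \ stSet G v) := by
  rintro y ⟨hyA, hyv⟩ hy
  by_cases hall : ∀ c ∈ A, G.Adj y c → G.dist x c < G.dist x y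
  · exact hA y hyA hall
  push Not at hall
  obtain ⟨c, hcA, hadj, hcd⟩ := hall
  have hc : G.dist x y + 1 = G.dist x c := by
    rcases hG.dist_eq_dist_add_one_of_adj x hadj with h | h <;> omega
  have hcv : c ∈ stSet G v := by
    by_contra h
    have := hy c ⟨hcA, h⟩ hadj
    omega
  rcases hcv with rfl | hvc
  · exact absurd (.inr hadj.symm) hyv
  rcases hG.dist_eq_dist_add_one_of_adj x hvc with h | h
  · omega
  · exact absurd (.inl (hG.eq_of_adj_of_dist_add_one x hadj hvc hc h.symm)) hyv

variable [Fintype V] [DecidableEq V]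

theorem contractibleSpace_indepComplexOn (hG : G.IsTree) {x : V} {A : Set V} (hx : x ∈ A)
    (hA : G.ChildlessDistDvdThree x A) : ContractibleSpace (indepComplexOn G A).space := by
  induction A using WellFoundedLT.induction with | _ A ih => ?_
  obtain ⟨y, hyA, hmax⟩ := A.exists_max_image (G.dist x) A.toFinite ⟨x, hx⟩
  by_cases hiso : ∀ w ∈ A, ¬ G.Adj y w
  · exact contractibleSpace_indepComplexOn_of_isolated hyA hiso
  push Not at hiso
  obtain ⟨v, hvA, hyv⟩ := hiso
  have hclose : ∀ w ∈ A, G.Adj y w → G.dist x w + 1 = G.dist x y := fun w hw hadj => by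
    have := hmax w hw
    rcases hG.dist_eq_dist_add_one_of_adj x hadj with h | h <;> omega
  have hleaf : ∀ w ∈ A, G.Adj y w → w = v := fun w hw hadj =>
    hG.eq_of_adj_of_dist_add_one x hadj.symm hyv.symm (hclose w hw hadj) (hclose v hvA hyv)
  have h3 : 3 ∣ G.dist x y := hA y hyA fun c hc hadj => by have := hclose c hc hadj; omega
  have hvy := hclose v hvA hyv
  have hxv : x ∉ stSet G v := by
    rintro (rfl | hadj)
    · rw [dist_self] at hvy; omega
    · rw [dist_comm, dist_eq_one_iff_adj.2 hadj] at hvy; omega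
  have := ih (A \ stSet G v) ⟨Set.sdiff_subset, fun h => (h hvA).2 (Set.mem_insert v _)⟩ ⟨hx, hxv⟩
    (hG.childlessDistDvdThree_sdiff_stSet hA (hvy ▸ h3))
  exact contractibleSpace_indepComplexOn_of_leaf hyA hvA hleaf

end IsTree

end SimpleGraph

/-- If a finite tree has a vertex `x` such that every path from `x` to
a leaf has length divisible by 3, then its independence complex is contractible. -/
theorem indep_tree_contractible {V : Type} [Fintype V] (G : SimpleGraph V)
    (h : G.IsTree) (x : V)
    (hx : ∀ (l : V) (p : G.Walk x l), (∃! u, G.Adj l u) → p.IsPath → 3 ∣ p.length) :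
    ContractibleSpace (indepComplex G).space := by
  classical
  refine h.contractibleSpace_indepComplexOn (Set.mem_univ x) fun y _ hy => ?_
  obtain ⟨p, hp⟩ := h.connected.exists_walk_length_eq_dist x y
  have hparent : ∀ w, G.Adj y w → G.dist x w + 1 = G.dist x y := fun w hw => by
    have := hy w (Set.mem_univ w) hw
    rcases h.dist_eq_dist_add_one_of_adj x hw with hd | hd <;> omega
  rcases eq_or_ne x y with rfl | hxy
  · simp
  have hnil : ¬ p.Nil := p.not_nil_of_ne hxy
  have hleaf : ∃! w, G.Adj y w := ⟨p.penultimate, (p.adj_penultimate hnil).symm, fun w hw =>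
    h.eq_of_adj_of_dist_add_one x hw.symm (p.adj_penultimate hnil) (hparent w hw)
      (hparent _ (p.adj_penultimate hnil).symm)⟩
  exact hp ▸ hx y p hleaf (p.isPath_of_length_eq_dist hp)
end
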